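/- Let Σ, Σ̂ be symmetric positive semidefinite d×d matrices. The Bures constraint B(Σ, Σ̂) ≤ θ, i.e., Tr(Σ + Σ̂ - 2(Σ̂^{1/2} Σ Σ̂^{1/2})^{1/2}) ≤ θ², holds if and only if there exists Z ∈ ℝ^{d×d} such that the block matrix [[Σ̂, Z], [Zᵀ, Σ]] is positive semidefinite and Tr(Σ + Σ̂ - 2Z) ≤ θ². -/

import Mathlib

open Matrix

open scoped ComplexOrder in
/-- The positive semidefinite square root of a positive semidefinite matrix
(the definition Mathlib had, since removed). -/
noncomputable def Matrix.PosSemidef.sqrt {n 𝕜 : Type*} [Fintype n] [RCLike 𝕜] [DecidableEq n]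
    {A : Matrix n n 𝕜} (hA : A.PosSemidef) : Matrix n n 𝕜 :=
  hA.1.eigenvectorUnitary.1 * diagonal ((↑) ∘ (√·) ∘ hA.1.eigenvalues) *
    (star hA.1.eigenvectorUnitary : Matrix n n 𝕜)

/-!
Write `A = Σ̂^{1/2}` and `C = Σ^{1/2}`. The block matrix `[[A², Z], [Zᵀ, C²]]` is positive
semidefinite iff `Z = A K C` for a contraction `K`; for the forward implication take
`K = A⁺ Z C⁺` with pseudo-inverses, which also covers singular `A` and `C` because the kernel
of `A` is contained in that of `Zᵀ`. Then `Tr Z = Tr (K Xᵀ)` with `X = A C`, and the maximum of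
`Tr (K Xᵀ)` over contractions is `Tr S` for `S = (X Xᵀ)^{1/2} = (Σ̂^{1/2} Σ Σ̂^{1/2})^{1/2}`:
the polar factor `K₀ = S⁺ X` attains it, and since `X = S K₀`, conjugating `[[1, K], [Kᵀ, 1]]`
by `diag(S^{1/2}, S^{1/2} K₀)` gives `2 Tr (K Xᵀ) ≤ Tr S + Tr (S^{1/2} K₀ K₀ᵀ S^{1/2}) ≤ 2 Tr S`.
-/

open scoped MatrixOrder

namespace Matrix

lemma IsHermitian.transpose_eq {n : Type*} {A : Matrix n n ℝ} (hA : A.IsHermitian) : Aᵀ = A :=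
  (isHermitian_iff_isSymm.mp hA).eq

section FunctionalCalculus

variable {n : Type*} [Fintype n] [DecidableEq n]

lemma PosSemidef.sqrt_eq_cfcSqrt {A : Matrix n n ℝ} (hA : A.PosSemidef) :
    hA.sqrt = CFC.sqrt A := by
  rw [CFC.sqrt_eq_real_sqrt A hA.nonneg, cfcₙ_eq_cfc, hA.1.cfc_eq]
  rfl

lemma cfc_mul_cfc (A : Matrix n n ℝ) (f g : ℝ → ℝ) :
    cfc f A * cfc g A = cfc (fun x ↦ f x * g x) A :=
  (cfc_mul f g A (A.finite_real_spectrum.continuousOn f)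
    (A.finite_real_spectrum.continuousOn g)).symm

/-- For symmetric `A` this is the Moore–Penrose pseudo-inverse: the zero eigenvalues stay zero
because `(0 : ℝ)⁻¹ = 0`. -/
noncomputable def pinv (A : Matrix n n ℝ) : Matrix n n ℝ := cfc (·⁻¹ : ℝ → ℝ) A

variable {A : Matrix n n ℝ}

lemma isHermitian_pinv (A : Matrix n n ℝ) : (pinv A).IsHermitian := cfc_predicate _ A

lemma pinv_mul_comm (hA : A.IsHermitian) : pinv A * A = A * pinv A := by
  have := (cfc_commute_cfc (·⁻¹ : ℝ → ℝ) (fun x ↦ x) A).eq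
  rwa [cfc_id' ℝ A hA.isSelfAdjoint] at this

lemma mul_pinv_mul_self (hA : A.IsHermitian) : A * pinv A * A = A := by
  have hid : cfc (fun x : ℝ ↦ x) A = A := cfc_id' ℝ A hA.isSelfAdjoint
  calc A * pinv A * A = cfc (fun x : ℝ ↦ x * x⁻¹ * x) A := by
        rw [← cfc_mul_cfc, ← cfc_mul_cfc, hid, pinv]
    _ = A := by simp only [mul_inv_mul_cancel, hid]

lemma mul_self_mul_one_sub_pinv_mul (hA : A.IsHermitian) : A * A * (1 - pinv A * A) = 0 := by
  rw [Matrix.mul_sub, Matrix.mul_one, ← Matrix.mul_assoc, Matrix.mul_assoc A,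
    ← pinv_mul_comm hA, ← Matrix.mul_assoc, mul_pinv_mul_self hA, sub_self]

lemma mul_pinv_mul_of_transpose_mul_eq_zero {m : Type*} (hA : A.IsHermitian) {Z : Matrix n m ℝ}
    (h : Zᵀ * (1 - pinv A * A) = 0) : A * pinv A * Z = Z := by
  have := congrArg transpose h
  rw [transpose_mul, transpose_sub, transpose_one, transpose_mul, hA.transpose_eq,
    (isHermitian_pinv A).transpose_eq, transpose_transpose, transpose_zero, Matrix.sub_mul,
    Matrix.one_mul, sub_eq_zero] at this
  exact this.symm

lemma posSemidef_one_sub_pinv_mul_mul_self_mul_pinv (hA : A.IsHermitian) :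
    (1 - pinv A * (A * A) * pinv A).PosSemidef := by
  have hid : cfc (fun x : ℝ ↦ x) A = A := cfc_id' ℝ A hA.isSelfAdjoint
  have : 1 - pinv A * (A * A) * pinv A = cfc (fun x : ℝ ↦ 1 - x⁻¹ * (x * x) * x⁻¹) A := by
    rw [cfc_sub _ _ A (A.finite_real_spectrum.continuousOn _)
      (A.finite_real_spectrum.continuousOn _), cfc_const_one ℝ A hA.isSelfAdjoint, ← cfc_mul_cfc,
      ← cfc_mul_cfc, ← cfc_mul_cfc, hid, pinv]
  rw [this, ← nonneg_iff_posSemidef]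
  refine cfc_nonneg fun x _ ↦ ?_
  rcases eq_or_ne x 0 with rfl | hx
  · simp
  · simp [hx]

end FunctionalCalculus

section Kernel

variable {m n : Type*} [Fintype m] [DecidableEq m]

lemma PosSemidef.mul_eq_zero_of_transpose_mul_mul_eq_zero {N : Matrix m m ℝ}
    (hN : N.PosSemidef) {F : Matrix m n ℝ} (h : Fᵀ * N * F = 0) : N * F = 0 := by
  obtain ⟨L, rfl⟩ := CStarAlgebra.nonneg_iff_eq_star_mul_self.mp hN.nonneg
  rw [star_eq_conjTranspose, conjTranspose_mul_self_mul_eq_zero,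
    ← conjTranspose_mul_self_eq_zero, ← h, conjTranspose_mul,
    conjTranspose_eq_transpose_of_trivial, star_eq_conjTranspose]
  simp only [Matrix.mul_assoc]

variable [Fintype n] {S : Matrix m m ℝ} {X : Matrix m n ℝ}

lemma mul_pinv_mul_of_mul_self_eq (hS : S.IsHermitian) (hSX : S * S = X * Xᵀ) :
    S * (pinv S * X) = X := by
  have hker : Xᵀ * (1 - pinv S * S) = 0 := by
    rw [← conjTranspose_eq_transpose_of_trivial, ← self_mul_conjTranspose_mul_eq_zero,
      conjTranspose_eq_transpose_of_trivial, ← hSX, mul_self_mul_one_sub_pinv_mul hS]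
  rw [← Matrix.mul_assoc, mul_pinv_mul_of_transpose_mul_eq_zero hS hker]

lemma trace_pinv_mul_mul_transpose_of_mul_self_eq (hS : S.IsHermitian) (hSX : S * S = X * Xᵀ) :
    (pinv S * X * Xᵀ).trace = S.trace := by
  rw [Matrix.mul_assoc, ← hSX, ← Matrix.mul_assoc, pinv_mul_comm hS, mul_pinv_mul_self hS]

end Kernel

section Blocks

variable {m n : Type*} [Fintype m] [Fintype n] [DecidableEq m] [DecidableEq n]

def IsContraction (K : Matrix m n ℝ) : Prop := (fromBlocks 1 K Kᵀ 1).PosSemidef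

lemma isContraction_iff {K : Matrix m n ℝ} : IsContraction K ↔ (1 - K * Kᵀ).PosSemidef := by
  let _ : Invertible (1 : Matrix n n ℝ) := invertibleOne
  rw [IsContraction, ← conjTranspose_eq_transpose_of_trivial,
    PosDef.fromBlocks₂₂ 1 K PosDef.one, inv_one, Matrix.mul_one]

lemma PosSemidef.fromBlocks_zero {P : Matrix m m ℝ} {Q : Matrix n n ℝ} (hP : P.PosSemidef)
    (hQ : Q.PosSemidef) : (fromBlocks P 0 0 Q).PosSemidef := by
  obtain ⟨L, rfl⟩ := CStarAlgebra.nonneg_iff_eq_star_mul_self.mp hP.nonneg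
  obtain ⟨M, rfl⟩ := CStarAlgebra.nonneg_iff_eq_star_mul_self.mp hQ.nonneg
  simpa [star_eq_conjTranspose, fromBlocks_conjTranspose, fromBlocks_transpose,
    fromBlocks_multiply] using posSemidef_conjTranspose_mul_self (fromBlocks L 0 0 M)

lemma PosSemidef.transpose_mul_eq_zero_of_fromBlocks {P : Matrix m m ℝ} {Q : Matrix n n ℝ}
    {Z : Matrix m n ℝ} (h : (fromBlocks P Z Zᵀ Q).PosSemidef) {E : Matrix m m ℝ}
    (hE : P * E = 0) : Zᵀ * E = 0 := by
  set F := fromRows E (0 : Matrix n m ℝ)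
  have hF : Fᵀ * fromBlocks P Z Zᵀ Q * F = 0 := by
    rw [Matrix.mul_assoc, fromBlocks_mul_fromRows, transpose_fromRows, fromCols_mul_fromRows]
    simp [hE]
  have := h.mul_eq_zero_of_transpose_mul_mul_eq_zero hF
  rw [fromBlocks_mul_fromRows, ← fromRows_zero, fromRows_inj.eq_iff] at this
  simpa using this.2

lemma PosSemidef.mul_eq_zero_of_fromBlocks {P : Matrix m m ℝ} {Q : Matrix n n ℝ}
    {Z : Matrix m n ℝ} (h : (fromBlocks P Z Zᵀ Q).PosSemidef) {E : Matrix n n ℝ}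
    (hE : Q * E = 0) : Z * E = 0 := by
  have hswap : (fromBlocks Q Zᵀ Zᵀᵀ P).PosSemidef := by
    rw [transpose_transpose, ← fromBlocks_submatrix_sum_swap_sum_swap]
    exact (posSemidef_submatrix_equiv (Equiv.sumComm n m)).mpr h
  simpa using hswap.transpose_mul_eq_zero_of_fromBlocks hE

lemma PosSemidef.two_mul_trace_le_of_fromBlocks {P Q Z : Matrix n n ℝ}
    (h : (fromBlocks P Z Zᵀ Q).PosSemidef) : 2 * Z.trace ≤ P.trace + Q.trace := by
  have := (h.conjTranspose_mul_mul_same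
    (fromRows (1 : Matrix n n ℝ) (-1 : Matrix n n ℝ))).trace_nonneg
  rw [conjTranspose_eq_transpose_of_trivial, Matrix.mul_assoc, fromBlocks_mul_fromRows,
    transpose_fromRows, fromCols_mul_fromRows] at this
  simp only [transpose_one, transpose_neg, Matrix.mul_one, Matrix.mul_neg, Matrix.one_mul,
    Matrix.neg_mul, trace_add, trace_neg, trace_transpose] at this
  linarith

theorem posSemidef_fromBlocks_mul_self_iff {A : Matrix m m ℝ} {C : Matrix n n ℝ}
    {Z : Matrix m n ℝ} (hA : A.IsHermitian) (hC : C.IsHermitian) :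
    (fromBlocks (A * A) Z Zᵀ (C * C)).PosSemidef ↔
      ∃ K : Matrix m n ℝ, IsContraction K ∧ Z = A * K * C := by
  constructor
  · intro hN
    refine ⟨pinv A * Z * pinv C, ?_, ?_⟩
    · -- `[[1, K], [Kᵀ, 1]] = D N Dᵀ + diag(1 - A⁺A²A⁺, 1 - C⁺C²C⁺)` with `D = diag(A⁺, C⁺)`
      have hsum := (hN.mul_mul_conjTranspose_same (fromBlocks (pinv A) 0 0 (pinv C))).add
        ((posSemidef_one_sub_pinv_mul_mul_self_mul_pinv hA).fromBlocks_zero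
          (posSemidef_one_sub_pinv_mul_mul_self_mul_pinv hC))
      rw [IsContraction]
      convert hsum using 1
      simp [conjTranspose_eq_transpose_of_trivial, fromBlocks_transpose, fromBlocks_multiply,
        fromBlocks_add, transpose_mul, (isHermitian_pinv A).transpose_eq,
        (isHermitian_pinv C).transpose_eq, Matrix.mul_assoc]
    · have hAZ : A * pinv A * Z = Z := mul_pinv_mul_of_transpose_mul_eq_zero hA <|
        hN.transpose_mul_eq_zero_of_fromBlocks (mul_self_mul_one_sub_pinv_mul hA)
      have hZC : Z * (1 - pinv C * C) = 0 :=
        hN.mul_eq_zero_of_fromBlocks (mul_self_mul_one_sub_pinv_mul hC)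
      rw [Matrix.mul_sub, Matrix.mul_one, sub_eq_zero] at hZC
      calc Z = A * pinv A * Z * (pinv C * C) := by rw [hAZ, ← hZC]
        _ = A * (pinv A * Z * pinv C) * C := by simp only [Matrix.mul_assoc]
  · rintro ⟨K, hK, rfl⟩
    convert hK.mul_mul_conjTranspose_same (fromBlocks A 0 0 C) using 1
    simp [conjTranspose_eq_transpose_of_trivial, fromBlocks_transpose, fromBlocks_multiply,
      hA.transpose_eq, hC.transpose_eq, Matrix.mul_assoc]

lemma isContraction_pinv_mul_of_mul_self_eq {S : Matrix m m ℝ} {X : Matrix m n ℝ}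
    (hS : S.IsHermitian) (hSX : S * S = X * Xᵀ) : IsContraction (pinv S * X) := by
  rw [isContraction_iff, transpose_mul, (isHermitian_pinv S).transpose_eq, Matrix.mul_assoc,
    ← Matrix.mul_assoc X, ← hSX, ← Matrix.mul_assoc]
  exact posSemidef_one_sub_pinv_mul_mul_self_mul_pinv hS

lemma trace_mul_transpose_mul_le {S : Matrix m m ℝ} (hS : S.PosSemidef) {K W : Matrix m n ℝ}
    (hK : IsContraction K) (hW : IsContraction W) : (K * Wᵀ * S).trace ≤ S.trace := by
  set Y := CFC.sqrt S
  have hYt : Yᵀ = Y := (CFC.sqrt_nonneg S).posSemidef.1.transpose_eq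
  have hYY : Y * Y = S := CFC.sqrt_mul_sqrt_self S hS.nonneg
  have hblock : (fromBlocks (Y * Y) (Y * (K * Wᵀ) * Y) (Y * (K * Wᵀ) * Y)ᵀ
      (Y * (W * Wᵀ) * Y)).PosSemidef := by
    convert hK.mul_mul_conjTranspose_same (fromBlocks Y 0 0 (Y * W)) using 1
    simp [conjTranspose_eq_transpose_of_trivial, fromBlocks_transpose, fromBlocks_multiply,
      transpose_mul, hYt, Matrix.mul_assoc]
  have hWW := ((isContraction_iff.mp hW).mul_mul_conjTranspose_same Y).trace_nonneg
  rw [conjTranspose_eq_transpose_of_trivial, hYt, Matrix.mul_sub, Matrix.sub_mul,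
    Matrix.mul_one, trace_sub, hYY] at hWW
  have := hblock.two_mul_trace_le_of_fromBlocks
  rw [trace_mul_cycle, hYY, trace_mul_comm] at this
  linarith

theorem isGreatest_trace_mul_transpose (X : Matrix m n ℝ) :
    IsGreatest ((fun K ↦ (K * Xᵀ).trace) '' {K | IsContraction K})
      (CFC.sqrt (X * Xᵀ)).trace := by
  set S := CFC.sqrt (X * Xᵀ)
  have hS : S.PosSemidef := (CFC.sqrt_nonneg _).posSemidef
  have hSX : S * S = X * Xᵀ :=
    CFC.sqrt_mul_sqrt_self _ (posSemidef_self_mul_conjTranspose X).nonneg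
  have hK₀ := isContraction_pinv_mul_of_mul_self_eq hS.1 hSX
  refine ⟨⟨pinv S * X, hK₀, trace_pinv_mul_mul_transpose_of_mul_self_eq hS.1 hSX⟩, ?_⟩
  rintro _ ⟨K, hK, rfl⟩
  calc (K * Xᵀ).trace = (K * (pinv S * X)ᵀ * S).trace := by
        conv_lhs => rw [← mul_pinv_mul_of_mul_self_eq hS.1 hSX]
        rw [transpose_mul, hS.1.transpose_eq, Matrix.mul_assoc]
    _ ≤ S.trace := trace_mul_transpose_mul_le hS hK hK₀

theorem isGreatest_trace_of_posSemidef_fromBlocks {P Q : Matrix n n ℝ} (hP : P.PosSemidef)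
    (hQ : Q.PosSemidef) :
    IsGreatest (trace '' {Z | (fromBlocks P Z Zᵀ Q).PosSemidef})
      (CFC.sqrt (CFC.sqrt P * Q * CFC.sqrt P)).trace := by
  set A := CFC.sqrt P
  set C := CFC.sqrt Q
  have hA : A.IsHermitian := (CFC.sqrt_nonneg P).posSemidef.1
  have hC : C.IsHermitian := (CFC.sqrt_nonneg Q).posSemidef.1
  have hAA : A * A = P := CFC.sqrt_mul_sqrt_self P hP.nonneg
  have hCC : C * C = Q := CFC.sqrt_mul_sqrt_self Q hQ.nonneg
  have hblocks : {Z | (fromBlocks P Z Zᵀ Q).PosSemidef} =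
      (fun K ↦ A * K * C) '' {K | IsContraction K} := by
    ext Z
    rw [Set.mem_ofPred_eq, ← hAA, ← hCC, posSemidef_fromBlocks_mul_self_iff hA hC]
    simp only [Set.mem_image, Set.mem_ofPred_eq, eq_comm]
  have htrace (K : Matrix n n ℝ) : (A * K * C).trace = (K * (A * C)ᵀ).trace := by
    rw [transpose_mul, hA.transpose_eq, hC.transpose_eq, trace_mul_cycle, trace_mul_comm]
  have hM : A * Q * A = A * C * (A * C)ᵀ := by
    rw [transpose_mul, hA.transpose_eq, hC.transpose_eq, ← hCC]
    simp only [Matrix.mul_assoc]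
  rw [hblocks, Set.image_image, hM]
  simp only [htrace]
  exact isGreatest_trace_mul_transpose (A * C)

end Blocks

end Matrix

/-- **SDP representation of the Bures constraint.** For PSD matrices `Σ, Σ̂`,
`Tr(Σ + Σ̂ - 2 (Σ̂^{1/2} Σ Σ̂^{1/2})^{1/2}) ≤ θ²` holds iff there exists `Z` with
`[[Σ̂, Z], [Zᵀ, Σ]] ⪰ 0` and `Tr(Σ + Σ̂ - 2 Z) ≤ θ²`. -/
theorem bures_constraint_sdp_iff
    {d : ℕ} {S Shat : Matrix (Fin d) (Fin d) ℝ}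
    (hS : S.PosSemidef) (hShat : Shat.PosSemidef)
    (hM : (hShat.sqrt * S * hShat.sqrt).PosSemidef) (θ : ℝ) :
    (S + Shat - (2 : ℝ) • hM.sqrt).trace ≤ θ ^ 2 ↔
      ∃ Z : Matrix (Fin d) (Fin d) ℝ,
        (fromBlocks Shat Z Zᵀ S).PosSemidef ∧ (S + Shat - 2 • Z).trace ≤ θ ^ 2 := by
  obtain ⟨⟨Z₀, hZ₀, hZ₀_trace⟩, hmax⟩ := isGreatest_trace_of_posSemidef_fromBlocks hShat hS
  have htrace (W : Matrix (Fin d) (Fin d) ℝ) :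
      (S + Shat - 2 • W).trace = S.trace + Shat.trace - 2 * W.trace := by
    rw [trace_sub, trace_add, trace_smul, nsmul_eq_mul, Nat.cast_ofNat]
  simp only [ofNat_smul_eq_nsmul, htrace, hM.sqrt_eq_cfcSqrt, hShat.sqrt_eq_cfcSqrt]
  constructor
  · exact fun h ↦ ⟨Z₀, hZ₀, by linarith⟩
  · rintro ⟨Z, hZ, h⟩
    linarith [hmax ⟨Z, hZ, rfl⟩]
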